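/- Let F be a field of characteristic 2 and let V be a finite set of vectors in (Z/2Z)^k that is linearly dependent over F_2. Then in the group algebra F[(Z/2Z)^k], the product over v in V of (v + 1) equals zero. -/
import Mathlib

open Finset

lemma prod_single_eq (F : Type*) [Field F] (k : ℕ) (S : Finset (Fin k → ZMod 2)) :
    ∏ v ∈ S, (AddMonoidAlgebra.single v 1 : AddMonoidAlgebra F (Fin k → ZMod 2)) =
      AddMonoidAlgebra.single (∑ v ∈ S, v) 1 := by
  classical
  induction S using Finset.cons_induction with
  | empty => simp [AddMonoidAlgebra.one_def]
  | cons a s ha ih =>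
      rw [Finset.prod_cons, ih, AddMonoidAlgebra.single_mul_single, Finset.sum_cons, mul_one]

lemma prod_T_eq_zero (F : Type*) [Field F] [CharP F 2] (k : ℕ)
    (T : Finset (Fin k → ZMod 2)) (hT : T.Nonempty) (hsum : ∑ v ∈ T, v = 0) :
    ∏ v ∈ T, ((AddMonoidAlgebra.single v 1 + 1 : AddMonoidAlgebra F (Fin k → ZMod 2))) = 0 := by
  classical
  rw [Finset.prod_add]
  simp only [Finset.prod_const_one, mul_one, prod_single_eq]
  obtain ⟨t, ht⟩ := hT
  refine Finset.sum_involution (fun S _ => T \ S) ?_ ?_ (fun S _ => by simp) ?_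
  · intro S hS
    have hsub : S ⊆ T := Finset.mem_powerset.mp hS
    have h1 : ∑ v ∈ T \ S, v = ∑ v ∈ S, v := by
      have := Finset.sum_sdiff_eq_sub (f := fun v : Fin k → ZMod 2 => v) hsub
      rw [this, hsum, zero_sub]
      funext j
      simp [CharTwo.neg_eq]
    rw [h1, ← AddMonoidAlgebra.single_add]
    have : (1 + 1 : F) = 0 := CharTwo.add_self_eq_zero 1
    rw [this, AddMonoidAlgebra.single_zero]
  · intro S hS _
    intro heq
    have heq' : T \ S = S := heq
    by_cases h : t ∈ S
    · have h2 : t ∈ T \ S := heq'.symm ▸ h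
      exact (Finset.mem_sdiff.mp h2).2 h
    · have : t ∈ T \ S := Finset.mem_sdiff.mpr ⟨ht, h⟩
      rw [heq'] at this
      exact h this
  · intro S hS
    exact Finset.sdiff_sdiff_eq_self (Finset.mem_powerset.mp hS)

theorem stmt_3 (F : Type*) [Field F] [CharP F 2] (k : ℕ)
    (V : Finset (Fin k → ZMod 2))
    (hdep : ¬ LinearIndependent (ZMod 2) (fun v : {x // x ∈ V} => (v : Fin k → ZMod 2))) :
    ∏ v ∈ V, ((AddMonoidAlgebra.single v 1 + 1 : AddMonoidAlgebra F (Fin k → ZMod 2))) = 0 := by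
  classical
  obtain ⟨g, hg0, i, hgi⟩ := Fintype.not_linearIndependent_iff.mp hdep
  set T' : Finset {x // x ∈ V} := Finset.univ.filter (fun j => g j ≠ 0) with hT'
  set T : Finset (Fin k → ZMod 2) := T'.image Subtype.val with hTdef
  have hsub : T ⊆ V := by
    intro x hx
    obtain ⟨j, _, rfl⟩ := Finset.mem_image.mp hx
    exact j.2
  have hone : ∀ x : ZMod 2, x ≠ 0 → x = 1 := by decide
  have hTne : T.Nonempty := ⟨i.val, Finset.mem_image.mpr ⟨i, Finset.mem_filter.mpr ⟨Finset.mem_univ _, hgi⟩, rfl⟩⟩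
  have hTsum : ∑ v ∈ T, v = 0 := by
    rw [hTdef, Finset.sum_image (g := Subtype.val) (f := fun v : Fin k → ZMod 2 => v) (fun a _ b _ h => Subtype.val_injective h)]
    calc ∑ j ∈ T', (j : Fin k → ZMod 2)
        = ∑ j ∈ T', g j • (j : Fin k → ZMod 2) := by
          refine Finset.sum_congr rfl fun j hj => ?_
          rw [hone (g j) (Finset.mem_filter.mp hj).2, one_smul]
      _ = ∑ j : {x // x ∈ V}, g j • (j : Fin k → ZMod 2) := by
          refine Finset.sum_subset (Finset.subset_univ _) fun j _ hj => ?_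
          have : g j = 0 := by
            by_contra h
            exact hj (Finset.mem_filter.mpr ⟨Finset.mem_univ _, h⟩)
          rw [this, zero_smul]
      _ = 0 := hg0
  rw [← Finset.prod_sdiff hsub, prod_T_eq_zero F k T hTne hTsum, mul_zero]
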